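/- arXiv:1203.0730 — 2 statements merged into one kernel-verified Lean document; each statement's English description precedes it below -/
import Mathlib

section
/- High-probability set of good conditioning points: let p_X, q_X be pmfs on a countable alphabet 𝒳 and let p_{Y|X}, q_{Y|X} be conditional pmfs from 𝒳 to a countable alphabet 𝒴 with ‖p_X p_{Y|X} − q_X q_{Y|X}‖ ≤ ε for some ε > 0. Then the set A := {x ∈ 𝒳 : ‖p_{Y|X=x} − q_{Y|X=x}‖ ≤ √ε} has probability at least 1 − 2√ε under both p_X and q_X. -/
open scoped BigOperators

noncomputable section

/-- `p` is a probability mass function on `α`: nonnegative and summing to one. -/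
def IsPmf {α : Type*} (p : α → ℝ) : Prop := (∀ a, 0 ≤ p a) ∧ HasSum p 1

/-- Total variation distance between two pmfs on the same alphabet:
`‖p − q‖ = (1/2) Σ |p − q|`. -/
def TV {α : Type*} (p q : α → ℝ) : ℝ := (1 / 2) * ∑' a, |p a - q a|

/-!
Write `D x := Σ_y |p_X(x) p_{Y|X}(y|x) − q_X(x) q_{Y|X}(y|x)|`, so that `Σ_x D x ≤ 2ε`.
Marginalising over `y` gives `|p_X(x) − q_X(x)| ≤ D x`, and then the triangle inequality
`p_X(x) |W(y) − V(y)| ≤ |p_X(x) W(y) − q_X(x) V(y)| + |p_X(x) − q_X(x)| V(y)` yields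
`p_X(x) ‖W_x − V_x‖ ≤ D x`. Hence the `p_X`-mean of `x ↦ ‖W_x − V_x‖` is at most `2ε`, and
Markov's inequality at level `√ε` bounds the mass of the bad set by `2√ε`. The claim for `q_X`
is the same argument with the roles of the two joint distributions exchanged.
-/

theorem TV_comm {α : Type*} (p q : α → ℝ) : TV p q = TV q p := by
  simp only [TV, abs_sub_comm]

theorem TV_nonneg {α : Type*} (p q : α → ℝ) : 0 ≤ TV p q :=
  mul_nonneg (by norm_num) (tsum_nonneg fun _ => abs_nonneg _)

theorem IsPmf.mul_kernel {α β : Type*} {p : α → ℝ} {W : α → β → ℝ} (hp : IsPmf p)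
    (hW : ∀ x, IsPmf (W x)) : IsPmf fun a : α × β => p a.1 * W a.1 a.2 := by
  have hnonneg : ∀ a : α × β, 0 ≤ p a.1 * W a.1 a.2 := fun a => mul_nonneg (hp.1 _) ((hW _).1 _)
  have hfiber : ∀ x, HasSum (fun y => p x * W x y) (p x) := fun x => by
    simpa using (hW x).2.mul_left (p x)
  have hsum : Summable fun a : α × β => p a.1 * W a.1 a.2 :=
    (summable_prod_of_nonneg hnonneg).2
      ⟨fun x => (hfiber x).summable, by simpa only [(hfiber _).tsum_eq] using hp.2.summable⟩
  refine ⟨hnonneg, ?_⟩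
  rw [← (hsum.hasSum.prod_fiberwise hfiber).unique hp.2]
  exact hsum.hasSum

theorem TV_uncurry_eq_tsum_TV {α β : Type*} {f g : α → β → ℝ}
    (h : Summable fun a : α × β => |f a.1 a.2 - g a.1 a.2|) :
    TV (fun a : α × β => f a.1 a.2) (fun a => g a.1 a.2) = ∑' x, TV (f x) (g x) := by
  simp only [TV, tsum_mul_left, h.tsum_prod]

theorem mul_TV_le_two_mul_TV_mul {β : Type*} {w v : β → ℝ} (hw : IsPmf w) (hv : IsPmf v)
    {a : ℝ} (ha : 0 ≤ a) (b : ℝ) :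
    a * TV w v ≤ 2 * TV (fun y => a * w y) (fun y => b * v y) := by
  have hdiff : HasSum (fun y => a * w y - b * v y) (a - b) := by
    simpa using (hw.2.mul_left a).sub (hv.2.mul_left b)
  have habs : Summable fun y => |a * w y - b * v y| := hdiff.summable.abs
  have hmass : |a - b| ≤ ∑' y, |a * w y - b * v y| :=
    abs_le.2 ⟨hasSum_le (fun _ => neg_abs_le _) habs.hasSum.neg hdiff,
      hasSum_le (fun _ => le_abs_self _) hdiff habs.hasSum⟩
  have hpoint : ∀ y, a * |w y - v y| ≤ |a * w y - b * v y| + |a - b| * v y := fun y =>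
    calc a * |w y - v y| = |a * w y - a * v y| := by rw [← mul_sub, abs_mul, abs_of_nonneg ha]
      _ ≤ |a * w y - b * v y| + |b * v y - a * v y| := abs_sub_le _ _ _
      _ = |a * w y - b * v y| + |a - b| * v y := by
        rw [← sub_mul, abs_mul, abs_of_nonneg (hv.1 y), abs_sub_comm b a]
  have hsum : a * ∑' y, |w y - v y| ≤ ∑' y, |a * w y - b * v y| + |a - b| := by
    rw [← tsum_mul_left]
    calc ∑' y, a * |w y - v y| ≤ ∑' y, (|a * w y - b * v y| + |a - b| * v y) :=
          Summable.tsum_le_tsum hpoint ((hw.2.summable.sub hv.2.summable).abs.mul_left a)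
            (habs.add (hv.2.summable.mul_left _))
      _ = ∑' y, |a * w y - b * v y| + |a - b| := by
        rw [habs.tsum_add (hv.2.summable.mul_left _), tsum_mul_left, hv.2.tsum_eq, mul_one]
  simp only [TV]
  linarith

theorem IsPmf.one_sub_div_le_tsum_subtype_le {α : Type*} {r T : α → ℝ} (hr : IsPmf r)
    (hT : ∀ x, 0 ≤ T x) (hrT : Summable fun x => r x * T x) {c s : ℝ} (hs : 0 < s)
    (hmean : ∑' x, r x * T x ≤ c) :
    1 - c / s ≤ ∑' x : {x // T x ≤ s}, r x := by
  have hpoint : ∀ x, r x ≤ {x | T x ≤ s}.indicator r x + r x * T x / s := by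
    intro x
    by_cases hx : T x ≤ s
    · simpa [hx] using div_nonneg (mul_nonneg (hr.1 x) (hT x)) hs.le
    · simp only [Set.indicator_apply, Set.mem_ofPred_eq, hx, if_false, zero_add]
      rw [le_div_iff₀ hs]
      exact mul_le_mul_of_nonneg_left (not_le.1 hx).le (hr.1 x)
  have hsum := hr.2.summable
  have hle : 1 ≤ ∑' x : {x // T x ≤ s}, r x + (∑' x, r x * T x) / s :=
    calc 1 = ∑' x, r x := hr.2.tsum_eq.symm
      _ ≤ ∑' x, ({x | T x ≤ s}.indicator r x + r x * T x / s) :=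
        Summable.tsum_le_tsum hpoint hsum ((hsum.indicator _).add (hrT.div_const s))
      _ = ∑' x : {x // T x ≤ s}, r x + (∑' x, r x * T x) / s := by
        rw [(hsum.indicator _).tsum_add (hrT.div_const s), tsum_div_const, ← tsum_subtype]
        rfl
  have : (∑' x, r x * T x) / s ≤ c / s := by gcongr
  linarith

theorem IsPmf.one_sub_two_sqrt_le_tsum_subtype_le_sqrt {α : Type*} {r T : α → ℝ} (hr : IsPmf r)
    (hT : ∀ x, 0 ≤ T x) (hrT : Summable fun x => r x * T x) {ε : ℝ} (hε : 0 < ε)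
    (hmean : ∑' x, r x * T x ≤ 2 * ε) :
    1 - 2 * Real.sqrt ε ≤ ∑' x : {x // T x ≤ Real.sqrt ε}, r x := by
  have h := hr.one_sub_div_le_tsum_subtype_le hT hrT (Real.sqrt_pos.2 hε) hmean
  rwa [mul_div_assoc, Real.div_sqrt] at h

theorem summable_mul_TV_and_tsum_mul_TV_le {α β : Type*} {pX qX : α → ℝ} {W V : α → β → ℝ}
    (hpX : IsPmf pX) (hqX : IsPmf qX) (hW : ∀ x, IsPmf (W x)) (hV : ∀ x, IsPmf (V x)) :
    (Summable fun x => pX x * TV (W x) (V x)) ∧ ∑' x, pX x * TV (W x) (V x) ≤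
      2 * TV (fun a : α × β => pX a.1 * W a.1 a.2) (fun a : α × β => qX a.1 * V a.1 a.2) := by
  have hjoint : Summable fun a : α × β => |pX a.1 * W a.1 a.2 - qX a.1 * V a.1 a.2| :=
    ((hpX.mul_kernel hW).2.summable.sub (hqX.mul_kernel hV).2.summable).abs
  have hfiber : Summable fun x => 2 * TV (fun y => pX x * W x y) (fun y => qX x * V x y) :=
    (hjoint.prod.mul_left (1 / 2)).mul_left 2
  have hbound : ∀ x, pX x * TV (W x) (V x) ≤
      2 * TV (fun y => pX x * W x y) (fun y => qX x * V x y) := fun x =>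
    mul_TV_le_two_mul_TV_mul (hW x) (hV x) (hpX.1 x) (qX x)
  have hsum : Summable fun x => pX x * TV (W x) (V x) :=
    hfiber.of_nonneg_of_le (fun x => mul_nonneg (hpX.1 x) (TV_nonneg _ _)) hbound
  refine ⟨hsum, ?_⟩
  calc ∑' x, pX x * TV (W x) (V x)
      ≤ ∑' x, 2 * TV (fun y => pX x * W x y) (fun y => qX x * V x y) :=
        hsum.tsum_le_tsum hbound hfiber
    _ = _ := by
      rw [tsum_mul_left, TV_uncurry_eq_tsum_TV (f := fun x y => pX x * W x y)
        (g := fun x y => qX x * V x y) hjoint]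

theorem good_conditioning_set_high_probability_general {𝒳 𝒴 : Type*}
    (pX qX : 𝒳 → ℝ) (W V : 𝒳 → 𝒴 → ℝ)
    (hpX : IsPmf pX) (hqX : IsPmf qX) (hW : ∀ x, IsPmf (W x)) (hV : ∀ x, IsPmf (V x))
    (ε : ℝ) (hε : 0 < ε)
    (h : TV (fun a : 𝒳 × 𝒴 => pX a.1 * W a.1 a.2) (fun a : 𝒳 × 𝒴 => qX a.1 * V a.1 a.2) ≤ ε) :
    1 - 2 * Real.sqrt ε ≤ (∑' x : {x : 𝒳 // TV (W x) (V x) ≤ Real.sqrt ε}, pX x) ∧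
      1 - 2 * Real.sqrt ε ≤ (∑' x : {x : 𝒳 // TV (W x) (V x) ≤ Real.sqrt ε}, qX x) := by
  obtain ⟨hp_summable, hp_mean⟩ := summable_mul_TV_and_tsum_mul_TV_le hpX hqX hW hV
  obtain ⟨hq_summable, hq_mean⟩ := summable_mul_TV_and_tsum_mul_TV_le hqX hpX hV hW
  simp only [TV_comm (V _)] at hq_summable hq_mean
  rw [TV_comm] at hq_mean
  have hTV : ∀ x, 0 ≤ TV (W x) (V x) := fun x => TV_nonneg _ _
  exact ⟨hpX.one_sub_two_sqrt_le_tsum_subtype_le_sqrt hTV hp_summable hε (by linarith),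
    hqX.one_sub_two_sqrt_le_tsum_subtype_le_sqrt hTV hq_summable hε (by linarith)⟩

/-- High-probability set of good conditioning points.  If
`‖p_X p_{Y|X} − q_X q_{Y|X}‖ ≤ ε` (for `ε > 0`), then the set
`A = {x : ‖p_{Y|X=x} − q_{Y|X=x}‖ ≤ √ε}` has probability at least `1 − 2√ε` under both
`p_X` and `q_X`. -/
theorem good_conditioning_set_high_probability {𝒳 𝒴 : Type*} [Countable 𝒳] [Countable 𝒴]
    (pX qX : 𝒳 → ℝ) (W V : 𝒳 → 𝒴 → ℝ)
    (hpX : IsPmf pX) (hqX : IsPmf qX) (hW : ∀ x, IsPmf (W x)) (hV : ∀ x, IsPmf (V x))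
    (ε : ℝ) (hε : 0 < ε)
    (h : TV (fun a : 𝒳 × 𝒴 => pX a.1 * W a.1 a.2) (fun a : 𝒳 × 𝒴 => qX a.1 * V a.1 a.2) ≤ ε) :
    1 - 2 * Real.sqrt ε ≤ (∑' x : {x : 𝒳 // TV (W x) (V x) ≤ Real.sqrt ε}, pX x) ∧
      1 - 2 * Real.sqrt ε ≤ (∑' x : {x : 𝒳 // TV (W x) (V x) ≤ Real.sqrt ε}, qX x) :=
  good_conditioning_set_high_probability_general pX qX W V hpX hqX hW hV ε hε h
end
end

section
/- Existence of good conditioning sequences (asymptotic version): let 𝒳^{(n)} and 𝒴^{(n)} be arbitrary countable sets, let p^{(n)}, q^{(n)} be pmfs on 𝒳^{(n)}, and let k^{(n)}, l^{(n)} be conditional pmfs from 𝒳^{(n)} to 𝒴^{(n)}. If ‖p^{(n)} k^{(n)} − q^{(n)} l^{(n)}‖ → 0 as n → ∞ (total variation of the joint pmfs), then there exists a sequence x^{(n)} ∈ 𝒳^{(n)} with p^{(n)}(x^{(n)}) > 0 such that ‖k^{(n)}(· | x^{(n)}) − l^{(n)}(· | x^{(n)})‖ → 0. -/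
/-!
Write `p ⊗ k` for the joint pmf `compProd p k`. Averaging `TV (k x) (l x)` against `p` gives
`TV (p ⊗ k) (p ⊗ l)`. By the triangle inequality through `q ⊗ l` this is at most
`TV (p ⊗ k) (q ⊗ l) + TV q p`, and `TV q p ≤ TV (q ⊗ l) (p ⊗ k)` because passing to the first
marginal does not increase total variation. So some `x` in the support of `p` has
`TV (k x) (l x) ≤ 2 TV (p ⊗ k) (q ⊗ l)`; choosing such an `x` for every `n` gives the sequence.
-/

open Filter
open scoped BigOperators Topology

noncomputable section

section

variable {α β : Type*}

def compProd (p : α → ℝ) (k : α → β → ℝ) : α × β → ℝ := fun a => p a.1 * k a.1 a.2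

theorem tv_nonneg (p q : α → ℝ) : 0 ≤ TV p q :=
  mul_nonneg (by norm_num) (tsum_nonneg fun _ => abs_nonneg _)

theorem tv_comm (p q : α → ℝ) : TV p q = TV q p := by
  simp only [TV, abs_sub_comm]

theorem tv_triangle {f g h : α → ℝ} (hf : Summable f) (hg : Summable g) (hh : Summable h) :
    TV f h ≤ TV f g + TV g h := by
  have hfg := (hf.sub hg).abs
  have hgh := (hg.sub hh).abs
  rw [TV, TV, TV, ← mul_add, ← hfg.tsum_add hgh]
  exact mul_le_mul_of_nonneg_left
    (Summable.tsum_le_tsum (fun a => abs_sub_le _ _ _) (hf.sub hh).abs (hfg.add hgh)) (by norm_num)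

theorem hasSum_prod_of_nonneg {f : α × β → ℝ} {g : α → ℝ} {s : ℝ} (hf : 0 ≤ f)
    (hfib : ∀ x, HasSum (fun y => f (x, y)) (g x)) (hg : HasSum g s) : HasSum f s := by
  have hsum : Summable f := (summable_prod_of_nonneg hf).2
    ⟨fun x => (hfib x).summable, by simpa only [(hfib _).tsum_eq] using hg.summable⟩
  rw [← (hsum.hasSum.prod_fiberwise hfib).unique hg]
  exact hsum.hasSum

theorem hasSum_compProd_fiber {k : α → β → ℝ} {x : α} (hk : HasSum (k x) 1) (p : α → ℝ) :
    HasSum (fun y => compProd p k (x, y)) (p x) := by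
  simpa [compProd] using hk.mul_left (p x)

theorem isPmf_compProd {p : α → ℝ} {k : α → β → ℝ} (hp : IsPmf p) (hk : ∀ x, IsPmf (k x)) :
    IsPmf (compProd p k) :=
  have h0 : 0 ≤ compProd p k := fun a => mul_nonneg (hp.1 a.1) ((hk a.1).1 a.2)
  ⟨h0, hasSum_prod_of_nonneg h0 (fun x => hasSum_compProd_fiber (hk x).2 p) hp.2⟩

theorem tsum_abs_tsum_sub_tsum_le {f g : α × β → ℝ} (hf : Summable f) (hg : Summable g) :
    ∑' x, |∑' y, f (x, y) - ∑' y, g (x, y)| ≤ ∑' a, |f a - g a| := by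
  have hfg : Summable fun a => |f a - g a| := (hf.sub hg).abs
  rw [hfg.tsum_prod]
  refine Summable.tsum_le_tsum (fun x => ?_) (hf.prod.sub hg.prod).abs hfg.prod
  rw [← (hf.prod_factor x).tsum_sub (hg.prod_factor x), ← Real.norm_eq_abs]
  exact norm_tsum_le_tsum_norm (hfg.prod_factor x)

theorem tv_le_tv_compProd {p q : α → ℝ} {k l : α → β → ℝ} (hp : IsPmf p) (hq : IsPmf q)
    (hk : ∀ x, IsPmf (k x)) (hl : ∀ x, IsPmf (l x)) :
    TV p q ≤ TV (compProd p k) (compProd q l) := by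
  have := tsum_abs_tsum_sub_tsum_le (isPmf_compProd hp hk).2.summable
    (isPmf_compProd hq hl).2.summable
  simp only [(hasSum_compProd_fiber (hk _).2 _).tsum_eq, (hasSum_compProd_fiber (hl _).2 _).tsum_eq]
    at this
  unfold TV
  gcongr

theorem tv_compProd_right {p q : α → ℝ} {l : α → β → ℝ} (hp : Summable p) (hq : Summable q)
    (hl : ∀ x, IsPmf (l x)) : TV (compProd p l) (compProd q l) = TV p q := by
  have hfactor : ∀ a : α × β,
      |compProd p l a - compProd q l a| = compProd (fun x => |p x - q x|) l a := fun a => by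
    rw [compProd, compProd, compProd, ← sub_mul, abs_mul, abs_of_nonneg ((hl a.1).1 a.2)]
  have hsum : HasSum (fun a => |compProd p l a - compProd q l a|) (∑' x, |p x - q x|) := by
    simp only [hfactor]
    exact hasSum_prod_of_nonneg (fun a => mul_nonneg (abs_nonneg _) ((hl a.1).1 a.2))
      (fun x => hasSum_compProd_fiber (hl x).2 _) (hp.sub hq).abs.hasSum
  rw [TV, hsum.tsum_eq, TV]

theorem hasSum_mul_tv {p : α → ℝ} {k l : α → β → ℝ} (hp : IsPmf p) (hk : ∀ x, IsPmf (k x))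
    (hl : ∀ x, IsPmf (l x)) :
    HasSum (fun x => p x * TV (k x) (l x)) (TV (compProd p k) (compProd p l)) := by
  have hs : Summable fun a : α × β => |compProd p k a - compProd p l a| :=
    ((isPmf_compProd hp hk).2.summable.sub (isPmf_compProd hp hl).2.summable).abs
  have hfib : ∀ x, HasSum (fun y => |compProd p k (x, y) - compProd p l (x, y)|)
      (p x * ∑' y, |k x y - l x y|) := fun x => by
    simp only [compProd, ← mul_sub, abs_mul, abs_of_nonneg (hp.1 x)]
    exact ((hk x).2.summable.sub (hl x).2.summable).abs.hasSum.mul_left (p x)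
  have hweights : (fun x => p x * TV (k x) (l x)) =
      fun x => 1 / 2 * (p x * ∑' y, |k x y - l x y|) := funext fun x => by
    rw [TV, mul_left_comm]
  rw [hweights, TV]
  exact (hs.hasSum.prod_fiberwise hfib).mul_left (1 / 2)

theorem IsPmf.exists_pos_le_of_hasSum_mul {p w : α → ℝ} {s : ℝ} (hp : IsPmf p)
    (hs : HasSum (fun x => p x * w x) s) : ∃ x, 0 < p x ∧ w x ≤ s := by
  by_contra! hlt
  obtain ⟨x₀, hx₀⟩ : ∃ x, 0 < p x := by
    by_contra! hle
    have hzero : p = 0 := funext fun x => le_antisymm (hle x) (hp.1 x)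
    exact zero_ne_one (hasSum_zero.unique (hzero ▸ hp.2))
  have hle : ∀ x, p x * s ≤ p x * w x := fun x => by
    rcases (hp.1 x).eq_or_lt with hx | hx
    · simp [← hx]
    · exact mul_le_mul_of_nonneg_left (hlt x hx).le hx.le
  exact lt_irrefl s (hasSum_lt hle (mul_lt_mul_of_pos_left (hlt x₀ hx₀) hx₀)
    (by simpa using hp.2.mul_right s) hs)

theorem exists_pos_tv_le_two_mul_tv_compProd {p q : α → ℝ} {k l : α → β → ℝ} (hp : IsPmf p)
    (hq : IsPmf q) (hk : ∀ x, IsPmf (k x)) (hl : ∀ x, IsPmf (l x)) :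
    ∃ x, 0 < p x ∧ TV (k x) (l x) ≤ 2 * TV (compProd p k) (compProd q l) := by
  have hpk := (isPmf_compProd hp hk).2.summable
  have hpl := (isPmf_compProd hp hl).2.summable
  have hql := (isPmf_compProd hq hl).2.summable
  have hbound : TV (compProd p k) (compProd p l) ≤ 2 * TV (compProd p k) (compProd q l) :=
    calc TV (compProd p k) (compProd p l)
        ≤ TV (compProd p k) (compProd q l) + TV (compProd q l) (compProd p l) :=
          tv_triangle hpk hql hpl
      _ = TV (compProd p k) (compProd q l) + TV p q := by
          rw [tv_compProd_right hq.2.summable hp.2.summable hl, tv_comm q p]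
      _ ≤ 2 * TV (compProd p k) (compProd q l) := by
          linarith [tv_le_tv_compProd hp hq hk hl]
  obtain ⟨x, hx, hle⟩ := hp.exists_pos_le_of_hasSum_mul (hasSum_mul_tv hp hk hl)
  exact ⟨x, hx, hle.trans hbound⟩

end

theorem exists_good_conditioning_sequence_general
    {𝒳 𝒴 : ℕ → Type*}
    (p q : ∀ n, 𝒳 n → ℝ) (k l : ∀ n, 𝒳 n → 𝒴 n → ℝ)
    (hp : ∀ n, IsPmf (p n)) (hq : ∀ n, IsPmf (q n))
    (hk : ∀ n x, IsPmf (k n x)) (hl : ∀ n x, IsPmf (l n x))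
    (h : Tendsto
      (fun n => TV (fun a : 𝒳 n × 𝒴 n => p n a.1 * k n a.1 a.2)
        (fun a : 𝒳 n × 𝒴 n => q n a.1 * l n a.1 a.2)) atTop (𝓝 0)) :
    ∃ x : ∀ n, 𝒳 n, (∀ n, 0 < p n (x n)) ∧
      Tendsto (fun n => TV (k n (x n)) (l n (x n))) atTop (𝓝 0) := by
  choose x hpos hle using fun n =>
    exists_pos_tv_le_two_mul_tv_compProd (hp n) (hq n) (hk n) (hl n)
  have hlim := h.const_mul 2
  rw [mul_zero] at hlim
  exact ⟨x, hpos, squeeze_zero (fun n => tv_nonneg _ _) hle hlim⟩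

/-- Existence of good conditioning sequences (asymptotic version).  If the
total variation between the joint pmfs `p⁽ⁿ⁾ k⁽ⁿ⁾` and `q⁽ⁿ⁾ l⁽ⁿ⁾` tends to `0`, then there
is a sequence of points `x⁽ⁿ⁾` with `p⁽ⁿ⁾(x⁽ⁿ⁾) > 0` along which the conditional pmfs
`k⁽ⁿ⁾(·|x⁽ⁿ⁾)` and `l⁽ⁿ⁾(·|x⁽ⁿ⁾)` become close in total variation. -/
theorem exists_good_conditioning_sequence
    {𝒳 𝒴 : ℕ → Type*} [∀ n, Countable (𝒳 n)] [∀ n, Countable (𝒴 n)]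
    (p q : ∀ n, 𝒳 n → ℝ) (k l : ∀ n, 𝒳 n → 𝒴 n → ℝ)
    (hp : ∀ n, IsPmf (p n)) (hq : ∀ n, IsPmf (q n))
    (hk : ∀ n x, IsPmf (k n x)) (hl : ∀ n x, IsPmf (l n x))
    (h : Tendsto
      (fun n => TV (fun a : 𝒳 n × 𝒴 n => p n a.1 * k n a.1 a.2)
        (fun a : 𝒳 n × 𝒴 n => q n a.1 * l n a.1 a.2)) atTop (𝓝 0)) :
    ∃ x : ∀ n, 𝒳 n, (∀ n, 0 < p n (x n)) ∧
      Tendsto (fun n => TV (k n (x n)) (l n (x n))) atTop (𝓝 0) :=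
  exists_good_conditioning_sequence_general p q k l hp hq hk hl h
end
end
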